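/- Let U ⊆ ℝ² be an open set, f : U → ℝ smooth with f_x and f_y nowhere zero on U, and b : U → ℝ smooth. Set H = f_{xy}/(f_x·f_y), ∂₁ = −(1/f_x)·∂/∂x, ∂₂ = −(1/f_y)·∂/∂y, and let ω₁ = −f_x dx, ω₂ = −f_y dy, ω₃ = df, ω₄ = f_x dx + b·f_y dy. Let s₁, s₂, t₁, t₂ : U → ℝ be smooth positive functions and put σᵢ = log sᵢ, τᵢ = log tᵢ (i = 1, 2). Then the conditions d(s₁ω₁) = d(s₂ω₂) = d(t₁ω₃) = d(t₂ω₄) = 0 together with s₁·t₁ = s₂·t₂ hold on U if and only if: ∂₂(σ₁) = H, ∂₁(σ₂) = H, ∂₂(τ₁) − ∂₁(τ₁) = 0, b·∂₁(τ₂) − ∂₂(τ₂) = (b − 1)·H − ∂₁(b), and σ₁ + τ₁ = σ₂ + τ₂ on U. -/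

import Mathlib

/-- Partial derivative with respect to the first coordinate. -/
noncomputable def pdx (f : ℝ × ℝ → ℝ) : ℝ × ℝ → ℝ :=
  fun q => deriv (fun t => f (t, q.2)) q.1

/-- Partial derivative with respect to the second coordinate. -/
noncomputable def pdy (f : ℝ × ℝ → ℝ) : ℝ × ℝ → ℝ :=
  fun q => deriv (fun t => f (q.1, t)) q.2

/-- The vector field `∂₁ = -(1/f_x)·∂/∂x` applied to a function `p`. -/
noncomputable def D1 (f p : ℝ × ℝ → ℝ) : ℝ × ℝ → ℝ :=
  fun q => -(pdx p q) / pdx f q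

/-- The vector field `∂₂ = -(1/f_y)·∂/∂y` applied to a function `p`. -/
noncomputable def D2 (f p : ℝ × ℝ → ℝ) : ℝ × ℝ → ℝ :=
  fun q => -(pdy p q) / pdy f q

/-- `H = f_{xy}/(f_x·f_y)`. -/
noncomputable def Hf (f : ℝ × ℝ → ℝ) : ℝ × ℝ → ℝ :=
  fun q => pdy (pdx f) q / (pdx f q * pdy f q)

/-- A differential 1-form `a dx + c dy` on (an open subset of) `ℝ²`, recorded by its
pair of coefficient functions `(a, c)`. -/
abbrev Form1 : Type := (ℝ × ℝ → ℝ) × (ℝ × ℝ → ℝ)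

/-- The coefficient of `dx ∧ dy` in the wedge product of two 1-forms. -/
noncomputable def wedge (α β : Form1) : ℝ × ℝ → ℝ :=
  fun q => α.1 q * β.2 q - α.2 q * β.1 q

/-- The coefficient of `dx ∧ dy` in the exterior derivative of a 1-form. -/
noncomputable def extd (α : Form1) : ℝ × ℝ → ℝ :=
  fun q => pdx α.2 q - pdy α.1 q

/-- Multiplication of a 1-form by a function. -/
noncomputable def smul1 (s : ℝ × ℝ → ℝ) (α : Form1) : Form1 :=
  (fun q => s q * α.1 q, fun q => s q * α.2 q)

/-- The coordinate 1-form `dx`. -/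
noncomputable def dX : Form1 := (fun _ => 1, fun _ => 0)

/-- The coordinate 1-form `dy`. -/
noncomputable def dY : Form1 := (fun _ => 0, fun _ => 1)

section Helpers

lemma sliceX_diff {g : ℝ × ℝ → ℝ} {q : ℝ × ℝ} (hg : DifferentiableAt ℝ g q) :
    DifferentiableAt ℝ (fun t => g (t, q.2)) q.1 :=
  hg.comp q.1 (differentiableAt_id.prodMk (differentiableAt_const _))

lemma sliceY_diff {g : ℝ × ℝ → ℝ} {q : ℝ × ℝ} (hg : DifferentiableAt ℝ g q) :
    DifferentiableAt ℝ (fun t => g (q.1, t)) q.2 :=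
  hg.comp q.2 ((differentiableAt_const _).prodMk differentiableAt_id)

lemma pdx_mul {u v : ℝ × ℝ → ℝ} {q : ℝ × ℝ} (hu : DifferentiableAt ℝ u q)
    (hv : DifferentiableAt ℝ v q) :
    pdx (fun p => u p * v p) q = pdx u q * v q + u q * pdx v q :=
  deriv_mul (sliceX_diff hu) (sliceX_diff hv)

lemma pdy_mul {u v : ℝ × ℝ → ℝ} {q : ℝ × ℝ} (hu : DifferentiableAt ℝ u q)
    (hv : DifferentiableAt ℝ v q) :
    pdy (fun p => u p * v p) q = pdy u q * v q + u q * pdy v q :=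
  deriv_mul (sliceY_diff hu) (sliceY_diff hv)

lemma pdx_neg (v : ℝ × ℝ → ℝ) (q : ℝ × ℝ) : pdx (fun p => -v p) q = -pdx v q := by
  simpa [pdx] using deriv.neg (f := fun t => v (t, q.2)) (x := q.1)

lemma pdy_neg (v : ℝ × ℝ → ℝ) (q : ℝ × ℝ) : pdy (fun p => -v p) q = -pdy v q := by
  simpa [pdy] using deriv.neg (f := fun t => v (q.1, t)) (x := q.2)

lemma pdx_const (c : ℝ) (q : ℝ × ℝ) : pdx (fun _ => c) q = 0 := by simp [pdx]

lemma pdy_const (c : ℝ) (q : ℝ × ℝ) : pdy (fun _ => c) q = 0 := by simp [pdy]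

lemma pdx_log {s : ℝ × ℝ → ℝ} {q : ℝ × ℝ} (hs : DifferentiableAt ℝ s q) (h0 : s q ≠ 0) :
    pdx (fun p => Real.log (s p)) q = pdx s q / s q :=
  (((sliceX_diff hs).hasDerivAt).log h0).deriv

lemma pdy_log {s : ℝ × ℝ → ℝ} {q : ℝ × ℝ} (hs : DifferentiableAt ℝ s q) (h0 : s q ≠ 0) :
    pdy (fun p => Real.log (s p)) q = pdy s q / s q :=
  (((sliceY_diff hs).hasDerivAt).log h0).deriv

lemma pdx_eq_fderiv {g : ℝ × ℝ → ℝ} {q : ℝ × ℝ} (hg : DifferentiableAt ℝ g q) :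
    pdx g q = fderiv ℝ g q (1, 0) := by
  have h1 : HasDerivAt (fun t : ℝ => ((t, q.2) : ℝ × ℝ)) ((1:ℝ), (0:ℝ)) q.1 :=
    (hasDerivAt_id q.1).prodMk (hasDerivAt_const _ _)
  exact (hg.hasFDerivAt.comp_hasDerivAt q.1 h1).deriv

lemma pdy_eq_fderiv {g : ℝ × ℝ → ℝ} {q : ℝ × ℝ} (hg : DifferentiableAt ℝ g q) :
    pdy g q = fderiv ℝ g q (0, 1) := by
  have h1 : HasDerivAt (fun t : ℝ => ((q.1, t) : ℝ × ℝ)) ((0:ℝ), (1:ℝ)) q.2 :=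
    (hasDerivAt_const _ _).prodMk (hasDerivAt_id q.2)
  exact (hg.hasFDerivAt.comp_hasDerivAt q.2 h1).deriv

lemma pdx_congr {u v : ℝ × ℝ → ℝ} {q : ℝ × ℝ} (h : u =ᶠ[nhds q] v) : pdx u q = pdx v q := by
  apply Filter.EventuallyEq.deriv_eq
  have hc : ContinuousAt (fun t : ℝ => ((t, q.2) : ℝ × ℝ)) q.1 := by fun_prop
  exact hc.preimage_mem_nhds h

lemma pdy_congr {u v : ℝ × ℝ → ℝ} {q : ℝ × ℝ} (h : u =ᶠ[nhds q] v) : pdy u q = pdy v q := by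
  apply Filter.EventuallyEq.deriv_eq
  have hc : ContinuousAt (fun t : ℝ => ((q.1, t) : ℝ × ℝ)) q.2 := by fun_prop
  exact hc.preimage_mem_nhds h

variable {U : Set (ℝ × ℝ)} (hU : IsOpen U) {f : ℝ × ℝ → ℝ}
  (hf : ContDiffOn ℝ (⊤ : ℕ∞) f U) {q : ℝ × ℝ} (hq : q ∈ U)

include hU hf in
lemma deriv_diffOn : DifferentiableOn ℝ (fun p => fderiv ℝ f p) U := by
  have := (contDiffOn_infty_iff_fderiv_of_isOpen hU).1 (by exact_mod_cast hf)
  exact this.2.differentiableOn (by norm_num)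

include hU hf hq

lemma pdxf_eventually : pdx f =ᶠ[nhds q] (fun p => fderiv ℝ f p (1, 0)) := by
  filter_upwards [hU.mem_nhds hq] with p hp
  exact pdx_eq_fderiv ((hf.differentiableOn (by norm_num)).differentiableAt (hU.mem_nhds hp))

lemma pdyf_eventually : pdy f =ᶠ[nhds q] (fun p => fderiv ℝ f p (0, 1)) := by
  filter_upwards [hU.mem_nhds hq] with p hp
  exact pdy_eq_fderiv ((hf.differentiableOn (by norm_num)).differentiableAt (hU.mem_nhds hp))

lemma pdxf_diff : DifferentiableAt ℝ (pdx f) q := by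
  have h2 : DifferentiableAt ℝ (fun p => fderiv ℝ f p (1, 0)) q :=
    ((deriv_diffOn hU hf).differentiableAt (hU.mem_nhds hq)).clm_apply (differentiableAt_const _)
  exact h2.congr_of_eventuallyEq (pdxf_eventually hU hf hq)

lemma pdyf_diff : DifferentiableAt ℝ (pdy f) q := by
  have h2 : DifferentiableAt ℝ (fun p => fderiv ℝ f p (0, 1)) q :=
    ((deriv_diffOn hU hf).differentiableAt (hU.mem_nhds hq)).clm_apply (differentiableAt_const _)
  exact h2.congr_of_eventuallyEq (pdyf_eventually hU hf hq)

lemma clairaut : pdx (pdy f) q = pdy (pdx f) q := by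
  have hF : DifferentiableAt ℝ (fun p => fderiv ℝ f p) q :=
    (deriv_diffOn hU hf).differentiableAt (hU.mem_nhds hq)
  have hsymm : IsSymmSndFDerivAt ℝ f q :=
    (hf.contDiffAt (hU.mem_nhds hq)).isSymmSndFDerivAt (by simp; exact WithTop.coe_le_coe.mpr (le_top : (2 : ℕ∞) ≤ ⊤))
  have hx : pdx (pdy f) q = fderiv ℝ (fun p => fderiv ℝ f p (0,1)) q (1,0) := by
    rw [pdx_congr (pdyf_eventually hU hf hq)]
    exact pdx_eq_fderiv (hF.clm_apply (differentiableAt_const _))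
  have hy : pdy (pdx f) q = fderiv ℝ (fun p => fderiv ℝ f p (1,0)) q (0,1) := by
    rw [pdy_congr (pdxf_eventually hU hf hq)]
    exact pdy_eq_fderiv (hF.clm_apply (differentiableAt_const _))
  rw [hx, hy]
  rw [fderiv_clm_apply hF (differentiableAt_const _),
      fderiv_clm_apply hF (differentiableAt_const _)]
  simp
  exact hsymm _ _

end Helpers

section Algebra

lemma alg1 (A B C s P : ℝ) (hA : A ≠ 0) (hB : B ≠ 0) (hs : s ≠ 0) :
    0 - (P * -A + s * -C) = 0 ↔ -(P / s) / B = C / (A * B) := by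
  constructor
  · intro h
    field_simp
    linear_combination -h
  · intro h
    field_simp at h
    have h2 := mul_right_cancel₀ hB
      (show (0 - (P * -A + s * -C)) * B = 0 * B by linear_combination -B * h)
    linear_combination h2

lemma alg2 (A B C s Q : ℝ) (hA : A ≠ 0) (hB : B ≠ 0) (hs : s ≠ 0) :
    Q * -B + s * -C - 0 = 0 ↔ -(Q / s) / A = C / (A * B) := by
  constructor
  · intro h
    field_simp
    linear_combination h
  · intro h
    field_simp at h
    have h2 := mul_right_cancel₀ hA
      (show (Q * -B + s * -C - 0) * A = 0 * A by linear_combination A * h)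
    linear_combination h2

lemma alg3 (A B C t X Y : ℝ) (hA : A ≠ 0) (hB : B ≠ 0) (ht : t ≠ 0) :
    X * B + t * C - (Y * A + t * C) = 0 ↔ -(Y / t) / B - -(X / t) / A = 0 := by
  constructor
  · intro h
    field_simp
    linear_combination h
  · intro h
    field_simp at h
    have h2 := mul_right_cancel₀ ht
      (show (X * B + t * C - (Y * A + t * C)) * t = 0 * t by linear_combination t * h)
    linear_combination h2

lemma alg4 (A B C t bq X Y E : ℝ) (hA : A ≠ 0) (hB : B ≠ 0) (ht : t ≠ 0) :
    X * (bq * B) + t * (E * B + bq * C) - (Y * A + t * C) = 0 ↔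
    bq * (-(X / t) / A) - -(Y / t) / B = (bq - 1) * (C / (A * B)) - -E / A := by
  have hmul : A * A * B * t ≠ 0 := mul_ne_zero (mul_ne_zero (mul_ne_zero hA hA) hB) ht
  constructor
  · intro h
    field_simp
    linear_combination -h
  · intro h
    field_simp at h
    have h2 := mul_right_cancel₀ hmul
      (show (X * (bq * B) + t * (E * B + bq * C) - (Y * A + t * C)) * (A * A * B * t)
          = 0 * (A * A * B * t) by linear_combination -(A * A * B * t) * h)
    linear_combination h2

end Algebra

/-- the full system of Samuelson equations. With positive smooth
factors `s₁, s₂, t₁, t₂` and `σᵢ = log sᵢ`, `τᵢ = log tᵢ`, the closedness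
conditions `d(s₁ω₁) = d(s₂ω₂) = d(t₁ω₃) = d(t₂ω₄) = 0` together with
`s₁t₁ = s₂t₂` hold on `U` iff `∂₂σ₁ = H`, `∂₁σ₂ = H`, `∂₂τ₁ - ∂₁τ₁ = 0`,
`b∂₁τ₂ - ∂₂τ₂ = (b-1)H - ∂₁b` and `σ₁ + τ₁ = σ₂ + τ₂` on `U`. -/
theorem samuelson_equations_system
    (U : Set (ℝ × ℝ)) (hU : IsOpen U)
    (f : ℝ × ℝ → ℝ) (hf : ContDiffOn ℝ (⊤ : ℕ∞) f U)
    (hfx : ∀ q ∈ U, pdx f q ≠ 0) (hfy : ∀ q ∈ U, pdy f q ≠ 0)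
    (b : ℝ × ℝ → ℝ) (hb : ContDiffOn ℝ (⊤ : ℕ∞) b U)
    (ω₁ ω₂ ω₃ ω₄ : Form1)
    (h1 : ω₁ = (fun q => -pdx f q, fun _ => 0))
    (h2 : ω₂ = (fun _ => 0, fun q => -pdy f q))
    (h3 : ω₃ = (fun q => pdx f q, fun q => pdy f q))
    (h4 : ω₄ = (fun q => pdx f q, fun q => b q * pdy f q))
    (s₁ s₂ t₁ t₂ : ℝ × ℝ → ℝ)
    (hs₁ : ContDiffOn ℝ (⊤ : ℕ∞) s₁ U) (hs₂ : ContDiffOn ℝ (⊤ : ℕ∞) s₂ U)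
    (ht₁ : ContDiffOn ℝ (⊤ : ℕ∞) t₁ U) (ht₂ : ContDiffOn ℝ (⊤ : ℕ∞) t₂ U)
    (hs₁pos : ∀ q ∈ U, 0 < s₁ q) (hs₂pos : ∀ q ∈ U, 0 < s₂ q)
    (ht₁pos : ∀ q ∈ U, 0 < t₁ q) (ht₂pos : ∀ q ∈ U, 0 < t₂ q)
    (σ₁ σ₂ τ₁ τ₂ : ℝ × ℝ → ℝ)
    (hσ₁ : σ₁ = fun q => Real.log (s₁ q)) (hσ₂ : σ₂ = fun q => Real.log (s₂ q))
    (hτ₁ : τ₁ = fun q => Real.log (t₁ q)) (hτ₂ : τ₂ = fun q => Real.log (t₂ q)) :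
    ((∀ q ∈ U, extd (smul1 s₁ ω₁) q = 0) ∧
     (∀ q ∈ U, extd (smul1 s₂ ω₂) q = 0) ∧
     (∀ q ∈ U, extd (smul1 t₁ ω₃) q = 0) ∧
     (∀ q ∈ U, extd (smul1 t₂ ω₄) q = 0) ∧
     (∀ q ∈ U, s₁ q * t₁ q = s₂ q * t₂ q)) ↔
    ((∀ q ∈ U, D2 f σ₁ q = Hf f q) ∧
     (∀ q ∈ U, D1 f σ₂ q = Hf f q) ∧
     (∀ q ∈ U, D2 f τ₁ q - D1 f τ₁ q = 0) ∧
     (∀ q ∈ U, b q * D1 f τ₂ q - D2 f τ₂ q = (b q - 1) * Hf f q - D1 f b q) ∧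
     (∀ q ∈ U, σ₁ q + τ₁ q = σ₂ q + τ₂ q)) := by
  subst h1 h2 h3 h4 hσ₁ hσ₂ hτ₁ hτ₂
  refine and_congr (forall₂_congr fun q hq => ?_)
    (and_congr (forall₂_congr fun q hq => ?_)
    (and_congr (forall₂_congr fun q hq => ?_)
    (and_congr (forall₂_congr fun q hq => ?_)
    (forall₂_congr fun q hq => ?_))))
  -- item 1
  · have mem : U ∈ nhds q := hU.mem_nhds hq
    have hA : pdx f q ≠ 0 := hfx q hq
    have hB : pdy f q ≠ 0 := hfy q hq
    have dfx : DifferentiableAt ℝ (pdx f) q := pdxf_diff hU hf hq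
    have ds₁ : DifferentiableAt ℝ s₁ q := (hs₁.differentiableOn (by norm_num)).differentiableAt mem
    have hs1 : s₁ q ≠ 0 := ne_of_gt (hs₁pos q hq)
    have e1 : pdy (fun p => s₁ p * -pdx f p) q
        = pdy s₁ q * -pdx f q + s₁ q * pdy (fun p => -pdx f p) q := pdy_mul ds₁ dfx.neg
    simp only [extd, smul1, D2, Hf, mul_zero]
    rw [pdx_const, e1, pdy_neg, pdy_log ds₁ hs1]
    exact alg1 _ _ _ _ _ hA hB hs1
  -- item 2
  · have mem : U ∈ nhds q := hU.mem_nhds hq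
    have hA : pdx f q ≠ 0 := hfx q hq
    have hB : pdy f q ≠ 0 := hfy q hq
    have dfy : DifferentiableAt ℝ (pdy f) q := pdyf_diff hU hf hq
    have hcl : pdx (pdy f) q = pdy (pdx f) q := clairaut hU hf hq
    have ds₂ : DifferentiableAt ℝ s₂ q := (hs₂.differentiableOn (by norm_num)).differentiableAt mem
    have hs2 : s₂ q ≠ 0 := ne_of_gt (hs₂pos q hq)
    have e1 : pdx (fun p => s₂ p * -pdy f p) q
        = pdx s₂ q * -pdy f q + s₂ q * pdx (fun p => -pdy f p) q := pdx_mul ds₂ dfy.neg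
    simp only [extd, smul1, D1, Hf, mul_zero]
    rw [pdy_const, e1, pdx_neg, hcl, pdx_log ds₂ hs2]
    exact alg2 _ _ _ _ _ hA hB hs2
  -- item 3
  · have mem : U ∈ nhds q := hU.mem_nhds hq
    have hA : pdx f q ≠ 0 := hfx q hq
    have hB : pdy f q ≠ 0 := hfy q hq
    have dfx : DifferentiableAt ℝ (pdx f) q := pdxf_diff hU hf hq
    have dfy : DifferentiableAt ℝ (pdy f) q := pdyf_diff hU hf hq
    have hcl : pdx (pdy f) q = pdy (pdx f) q := clairaut hU hf hq
    have dt₁ : DifferentiableAt ℝ t₁ q := (ht₁.differentiableOn (by norm_num)).differentiableAt mem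
    have ht1 : t₁ q ≠ 0 := ne_of_gt (ht₁pos q hq)
    have e1 : pdx (fun p => t₁ p * pdy f p) q
        = pdx t₁ q * pdy f q + t₁ q * pdx (pdy f) q := pdx_mul dt₁ dfy
    have e2 : pdy (fun p => t₁ p * pdx f p) q
        = pdy t₁ q * pdx f q + t₁ q * pdy (pdx f) q := pdy_mul dt₁ dfx
    simp only [extd, smul1, D1, D2]
    rw [e1, e2, hcl, pdx_log dt₁ ht1, pdy_log dt₁ ht1]
    have := alg3 (pdx f q) (pdy f q) (pdy (pdx f) q) (t₁ q) (pdx t₁ q) (pdy t₁ q) hA hB ht1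
    convert this using 2 <;> ring
  -- item 4
  · have mem : U ∈ nhds q := hU.mem_nhds hq
    have hA : pdx f q ≠ 0 := hfx q hq
    have hB : pdy f q ≠ 0 := hfy q hq
    have dfx : DifferentiableAt ℝ (pdx f) q := pdxf_diff hU hf hq
    have dfy : DifferentiableAt ℝ (pdy f) q := pdyf_diff hU hf hq
    have hcl : pdx (pdy f) q = pdy (pdx f) q := clairaut hU hf hq
    have dt₂ : DifferentiableAt ℝ t₂ q := (ht₂.differentiableOn (by norm_num)).differentiableAt mem
    have db : DifferentiableAt ℝ b q := (hb.differentiableOn (by norm_num)).differentiableAt mem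
    have ht2 : t₂ q ≠ 0 := ne_of_gt (ht₂pos q hq)
    have e1 : pdx (fun p => t₂ p * (b p * pdy f p)) q
        = pdx t₂ q * (b q * pdy f q) + t₂ q * pdx (fun p => b p * pdy f p) q :=
      pdx_mul dt₂ (db.mul dfy)
    have e2 : pdx (fun p => b p * pdy f p) q
        = pdx b q * pdy f q + b q * pdx (pdy f) q := pdx_mul db dfy
    have e3 : pdy (fun p => t₂ p * pdx f p) q
        = pdy t₂ q * pdx f q + t₂ q * pdy (pdx f) q := pdy_mul dt₂ dfx
    simp only [extd, smul1, D1, D2, Hf]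
    rw [e1, e2, e3, hcl, pdx_log dt₂ ht2, pdy_log dt₂ ht2]
    exact alg4 (pdx f q) (pdy f q) (pdy (pdx f) q) (t₂ q) (b q) (pdx t₂ q) (pdy t₂ q)
      (pdx b q) hA hB ht2
  -- item 5
  · have hs1 : (0:ℝ) < s₁ q := hs₁pos q hq
    have hs2 : (0:ℝ) < s₂ q := hs₂pos q hq
    have ht1 : (0:ℝ) < t₁ q := ht₁pos q hq
    have ht2 : (0:ℝ) < t₂ q := ht₂pos q hq
    show s₁ q * t₁ q = s₂ q * t₂ q ↔
      Real.log (s₁ q) + Real.log (t₁ q) = Real.log (s₂ q) + Real.log (t₂ q)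
    rw [← Real.log_mul (ne_of_gt hs1) (ne_of_gt ht1),
        ← Real.log_mul (ne_of_gt hs2) (ne_of_gt ht2)]
    exact ⟨fun h => by rw [h], fun h =>
      Real.log_injOn_pos (Set.mem_Ioi.2 (by positivity)) (Set.mem_Ioi.2 (by positivity)) h⟩
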